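/- arXiv:2003.02144 — 4 statements merged into one kernel-verified Lean document; each statement's English description precedes it below -/
import Mathlib

section
/- Let (M, dist) be a metric space modeling an MTS with states X, tasks ℓ_t : X → ℝ≥0 ∪ {∞}, and initial state x_0. Define the Follow-the-Prediction algorithm: given predictions p_1,...,p_T, at each time t it moves to x_t = argmin_{x ∈ X} (ℓ_t(x) + 2·dist(x, p_t)). Then for any offline sequence of states o_1,...,o_T starting from the same x_0, the total cost of FtP (movement plus service) is at most the total cost of the offline sequence plus 4·∑_{t=1}^T dist(p_t, o_t). -/
/-
Amortized analysis with potential `edist (x t) (o t)`, which vanishes at time `0`. In one step,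
the triangle inequality through `p` and the minimality of `x` against the candidate `o` bound
FtP's movement, its service cost and the new potential by the old potential plus the offline
step cost plus `4 * edist p o`; summing these step bounds telescopes the potential.
-/

open scoped ENNReal

open Finset

/-- Total cost of an MTS state sequence `x` on tasks `ℓ` (task `ℓ (t+1)` served
at time `t+1` by state `x (t+1)`, movement measured by `edist`). -/
noncomputable def mtsCost {X : Type*} [MetricSpace X]
    (ℓ : ℕ → X → ℝ≥0∞) (x : ℕ → X) (T : ℕ) : ℝ≥0∞ :=
  ∑ t ∈ Finset.range T, (edist (x t) (x (t + 1)) + ℓ (t + 1) (x (t + 1)))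

theorem sum_add_le_add_sum_of_potential {M : Type*} [AddCommMonoid M] [PartialOrder M]
    [IsOrderedAddMonoid M] {a b Φ : ℕ → M} {T : ℕ}
    (h : ∀ t < T, a t + Φ (t + 1) ≤ Φ t + b t) :
    ∑ t ∈ range T, a t + Φ T ≤ Φ 0 + ∑ t ∈ range T, b t := by
  induction T with
  | zero => simp
  | succ T ih =>
    calc ∑ t ∈ range (T + 1), a t + Φ (T + 1)
        = ∑ t ∈ range T, a t + (a T + Φ (T + 1)) := by rw [sum_range_succ, add_assoc]
      _ ≤ ∑ t ∈ range T, a t + (Φ T + b T) := add_le_add le_rfl (h T T.lt_succ_self)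
      _ = (∑ t ∈ range T, a t + Φ T) + b T := by rw [add_assoc]
      _ ≤ (Φ 0 + ∑ t ∈ range T, b t) + b T :=
          add_le_add (ih fun t ht => h t (ht.trans T.lt_succ_self)) le_rfl
      _ = Φ 0 + ∑ t ∈ range (T + 1), b t := by rw [sum_range_succ, add_assoc]

theorem ftp_step_le {X : Type*} [PseudoEMetricSpace X] (f : X → ℝ≥0∞) (p x₀ x₁ o₀ o₁ : X)
    (hmin : f x₁ + 2 * edist x₁ p ≤ f o₁ + 2 * edist o₁ p) :
    edist x₀ x₁ + f x₁ + edist x₁ o₁ ≤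
      edist x₀ o₀ + (edist o₀ o₁ + f o₁ + 4 * edist p o₁) := by
  calc edist x₀ x₁ + f x₁ + edist x₁ o₁
      ≤ (edist x₀ p + edist p x₁) + f x₁ + (edist x₁ p + edist p o₁) := by
        gcongr <;> exact edist_triangle _ _ _
    _ = edist x₀ p + (f x₁ + 2 * edist x₁ p) + edist p o₁ := by
        rw [edist_comm p x₁]; ring
    _ ≤ edist x₀ p + (f o₁ + 2 * edist o₁ p) + edist p o₁ := by gcongr
    _ ≤ (edist x₀ o₀ + edist o₀ o₁ + edist o₁ p) + (f o₁ + 2 * edist o₁ p) + edist p o₁ := by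
        gcongr; exact edist_triangle4 _ _ _ _
    _ = edist x₀ o₀ + (edist o₀ o₁ + f o₁ + 4 * edist p o₁) := by
        rw [edist_comm o₁ p]; ring

/-- **Follow-the-Prediction bound.** If at every time `t` the state `x t` minimizes
`ℓ_t(y) + 2·dist(y, p_t)`, then the total cost of FtP is at most the cost of any
offline sequence `o` (starting at the same initial state) plus `4·∑ dist(p_t, o_t)`. -/
theorem ftp_cost_bound {X : Type*} [MetricSpace X] (T : ℕ)
    (ℓ : ℕ → X → ℝ≥0∞) (p : ℕ → X) (x o : ℕ → X)
    (hstart : x 0 = o 0)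
    (hmin : ∀ t ∈ Finset.range T, ∀ y : X,
      ℓ (t + 1) (x (t + 1)) + 2 * edist (x (t + 1)) (p (t + 1)) ≤
        ℓ (t + 1) y + 2 * edist y (p (t + 1))) :
    mtsCost ℓ x T ≤
      mtsCost ℓ o T + 4 * ∑ t ∈ Finset.range T, edist (p (t + 1)) (o (t + 1)) := by
  have amortized := sum_add_le_add_sum_of_potential (Φ := fun t => edist (x t) (o t))
    fun t ht => ftp_step_le (ℓ (t + 1)) (p (t + 1)) (x t) (x (t + 1)) (o t) (o (t + 1))
      (hmin t (mem_range.2 ht) (o (t + 1)))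
  beta_reduce at amortized
  rw [hstart, edist_self, zero_add, sum_add_distrib (f := fun t => _ + _), ← mul_sum] at amortized
  exact le_of_add_le_left amortized
end

section
/- For the FtP exchange argument: if x_t minimizes x ↦ ℓ_t(x) + 2·dist(x, p_t), then for any state o_t, we have 2·dist(o_t, x_t) + ℓ_t(x_t) − ℓ_t(o_t) ≤ 4·dist(o_t, p_t). -/
open scoped ENNReal

theorem ftp_exchange_general {X : Type*} [MetricSpace X] (ℓ : X → ℝ≥0∞) (p o x : X)
    (hmin : ∀ y : X, ℓ x + 2 * edist x p ≤ ℓ y + 2 * edist y p) :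
    2 * edist o x + ℓ x - ℓ o ≤ 4 * edist o p := by
  rw [tsub_le_iff_right]
  calc 2 * edist o x + ℓ x ≤ 2 * (edist o p + edist x p) + ℓ x := by
        gcongr; exact edist_triangle_right o x p
    _ = 2 * edist o p + (ℓ x + 2 * edist x p) := by ring
    _ ≤ 2 * edist o p + (ℓ o + 2 * edist o p) := add_le_add_right (hmin o) _
    _ = 4 * edist o p + ℓ o := by ring

/-- **FtP exchange argument.** If `x` minimizes `y ↦ ℓ(y) + 2·dist(y, p)` and
`ℓ o < ∞`, then `2·dist(o, x) + ℓ(x) − ℓ(o) ≤ 4·dist(o, p)`. -/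
theorem ftp_exchange {X : Type*} [MetricSpace X] (ℓ : X → ℝ≥0∞) (p o x : X)
    (hmin : ∀ y : X, ℓ x + 2 * edist x p ≤ ℓ y + 2 * edist y p)
    (ho : ℓ o < ⊤) :
    2 * edist o x + ℓ x - ℓ o ≤ 4 * edist o p :=
  ftp_exchange_general ℓ p o x hmin
end

section
/- For finite subsets of a finite metric space: if S, P are subsets of a ground set V with |S| = |P|, then the min-cost matching distance between S and P equals the min-cost matching distance between their complements, i.e., dist(S, P) = dist(V∖S, V∖P). -/
/-- Min-cost perfect matching (earth-mover) distance between two finite sets of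
points of a metric space, as an infimum over bijections. -/
noncomputable def mdist {α : Type*} [MetricSpace α] (s t : Finset α) : ℝ :=
  sInf {c | ∃ f : α → α, Set.BijOn f ↑s ↑t ∧ c = ∑ x ∈ s, dist x (f x)}

/-! Points common to both sets may be assumed to be matched to themselves: in any matching,
sending a common point `a` to itself and its preimage `b` to its old image `f a` costs no more,
since `d(b, f a) ≤ d(b, a) + d(a, f a)`. Hence `dist(S, P) = dist(S ∖ P, P ∖ S)`, and
`Sᶜ ∖ Pᶜ = P ∖ S`, `Pᶜ ∖ Sᶜ = S ∖ P`, so symmetry of `dist` gives the theorem. -/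

open Finset Function Set

lemma exists_bijOn_of_card_eq {α : Type*} {s t : Finset α} (h : #s = #t) :
    ∃ f : α → α, BijOn f s t := by
  rcases isEmpty_or_nonempty α with _ | _
  · exact ⟨id, Subsingleton.elim s t ▸ bijOn_id _⟩
  · exact s.finite_toSet.exists_bijOn_of_encard_eq (by simp [h])

lemma Set.BijOn.update_self_of_erase {α : Type*} [DecidableEq α] {s t : Finset α} {g : α → α}
    {a : α} (hg : BijOn g (s.erase a) (t.erase a)) (hs : a ∈ s) (ht : a ∈ t) :
    BijOn (update g a a) s t := by
  have hg' : BijOn (update g a a) (↑s \ {a}) (↑t \ {a}) := by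
    rw [← coe_erase, ← coe_erase]
    exact hg.congr fun x hx => (update_of_ne (ne_of_mem_erase hx) _ _).symm
  simpa [hs, ht] using hg'.insert (a := a) (by simp)

section PseudoMetric

variable {α : Type*} [PseudoMetricSpace α] {s t : Finset α}

lemma Set.BijOn.exists_bijOn_symm_sum_dist_eq [Nonempty α] {f : α → α} (hf : BijOn f s t) :
    ∃ g, BijOn g t s ∧ ∑ y ∈ t, dist y (g y) = ∑ x ∈ s, dist x (f x) := by
  have hinv := hf.invOn_invFunOn
  refine ⟨invFunOn f s, hf.symm hinv.symm, Eq.symm ?_⟩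
  refine Finset.sum_nbij f (fun x hx => hf.mapsTo hx) hf.injOn hf.surjOn fun x hx => ?_
  rw [hinv.1 hx, dist_comm]

variable [DecidableEq α]

lemma sum_dist_comp_swap_le {f : α → α} {a b : α} (ha : a ∈ s) (hb : b ∈ s) (hfb : f b = a) :
    ∑ x ∈ s, dist x (f (Equiv.swap a b x)) ≤ ∑ x ∈ s, dist x (f x) := by
  rcases eq_or_ne a b with rfl | hab
  · simp
  have hb' : b ∈ s.erase a := mem_erase.2 ⟨hab.symm, hb⟩
  have split (g : α → ℝ) : ∑ x ∈ s, g x = g a + (g b + ∑ x ∈ (s.erase a).erase b, g x) := by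
    rw [add_sum_erase _ _ hb', add_sum_erase _ _ ha]
  have hrest : ∀ x ∈ (s.erase a).erase b, dist x (f (Equiv.swap a b x)) = dist x (f x) :=
    fun x hx => by
      rw [Equiv.swap_apply_of_ne_of_ne (ne_of_mem_erase (mem_of_mem_erase hx)) (ne_of_mem_erase hx)]
  calc ∑ x ∈ s, dist x (f (Equiv.swap a b x))
      = dist a (f (Equiv.swap a b a)) + (dist b (f (Equiv.swap a b b)) +
          ∑ x ∈ (s.erase a).erase b, dist x (f (Equiv.swap a b x))) := split _
    _ = dist b (f a) + ∑ x ∈ (s.erase a).erase b, dist x (f x) := by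
        rw [Equiv.swap_apply_left, Equiv.swap_apply_right, hfb, dist_self, zero_add,
          sum_congr rfl hrest]
    _ ≤ dist a (f a) + (dist b (f b) + ∑ x ∈ (s.erase a).erase b, dist x (f x)) := by
        rw [hfb]
        linarith [dist_triangle b a (f a), dist_comm a b]
    _ = ∑ x ∈ s, dist x (f x) := (split fun x => dist x (f x)).symm

lemma Set.BijOn.exists_bijOn_erase_sum_dist_le {f : α → α} {a : α} (hf : BijOn f s t)
    (hs : a ∈ s) (ht : a ∈ t) :
    ∃ g, BijOn g (s.erase a) (t.erase a) ∧
      ∑ x ∈ s.erase a, dist x (g x) ≤ ∑ x ∈ s, dist x (f x) := by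
  obtain ⟨b, hb, hfb⟩ := hf.surjOn ht
  have hfa : (f ∘ Equiv.swap a b) a = a := by simp [hfb]
  refine ⟨f ∘ Equiv.swap a b, ?_, ?_⟩
  · have := (hf.comp (Equiv.bijOn_swap hs hb)).sdiff_singleton hs
    rwa [hfa, ← coe_erase, ← coe_erase] at this
  · calc ∑ x ∈ s.erase a, dist x ((f ∘ Equiv.swap a b) x)
        = ∑ x ∈ s, dist x ((f ∘ Equiv.swap a b) x) := by
          rw [← add_sum_erase _ _ hs, hfa, dist_self, zero_add]
      _ ≤ ∑ x ∈ s, dist x (f x) := sum_dist_comp_swap_le hs hb hfb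

lemma sum_dist_update_self {g : α → α} {a : α} (ha : a ∈ s) :
    ∑ x ∈ s, dist x (update g a a x) = ∑ x ∈ s.erase a, dist x (g x) := by
  rw [← add_sum_erase _ _ ha, update_self, dist_self, zero_add]
  exact sum_congr rfl fun x hx => by rw [update_of_ne (ne_of_mem_erase hx)]

end PseudoMetric

section Mdist

variable {α : Type*} [MetricSpace α]

theorem mdist_comm (s t : Finset α) : mdist s t = mdist t s := by
  rcases isEmpty_or_nonempty α with _ | _
  · rw [Subsingleton.elim s t]
  · unfold mdist
    congr 1
    ext c
    constructor <;> rintro ⟨f, hf, rfl⟩ <;>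
      obtain ⟨g, hg, hsum⟩ := hf.exists_bijOn_symm_sum_dist_eq <;> exact ⟨g, hg, hsum.symm⟩

lemma mdist_le_mdist_of_forall_bijOn {s t s' t' : Finset α} (h : #s = #t)
    (H : ∀ f, BijOn f s t → ∃ g, BijOn g s' t' ∧
      ∑ x ∈ s', dist x (g x) ≤ ∑ x ∈ s, dist x (f x)) :
    mdist s' t' ≤ mdist s t := by
  obtain ⟨f₀, hf₀⟩ := exists_bijOn_of_card_eq h
  unfold mdist
  refine le_csInf ?_ ?_
  · exact ⟨_, f₀, hf₀, rfl⟩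
  rintro _ ⟨f, hf, rfl⟩
  obtain ⟨g, hg, hle⟩ := H f hf
  refine le_trans (csInf_le ?_ ⟨g, hg, rfl⟩) hle
  refine ⟨0, ?_⟩
  rintro _ ⟨g, -, rfl⟩
  exact Finset.sum_nonneg fun x _ => dist_nonneg

variable [DecidableEq α] {s t : Finset α}

theorem mdist_erase_erase {a : α} (hs : a ∈ s) (ht : a ∈ t) (h : #s = #t) :
    mdist (s.erase a) (t.erase a) = mdist s t :=
  le_antisymm
    (mdist_le_mdist_of_forall_bijOn h fun _ hf => hf.exists_bijOn_erase_sum_dist_le hs ht)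
    (mdist_le_mdist_of_forall_bijOn (by rw [card_erase_of_mem hs, card_erase_of_mem ht, h])
      fun _ hg => ⟨_, hg.update_self_of_erase hs ht, (sum_dist_update_self hs).le⟩)

theorem mdist_sdiff_of_subset_inter {u : Finset α} (h : #s = #t) (hu : u ⊆ s ∩ t) :
    mdist (s \ u) (t \ u) = mdist s t := by
  induction u using Finset.induction_on with
  | empty => simp
  | insert a u ha ih =>
    obtain ⟨hast, hu⟩ := insert_subset_iff.1 hu
    obtain ⟨has, hat⟩ := mem_inter.1 hast
    obtain ⟨hus, hut⟩ := subset_inter_iff.1 hu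
    have hcard : #(s \ u) = #(t \ u) := by
      rw [card_sdiff_of_subset hus, card_sdiff_of_subset hut, h]
    rw [sdiff_insert, sdiff_insert, mdist_erase_erase (mem_sdiff.2 ⟨has, ha⟩) (mem_sdiff.2 ⟨hat, ha⟩) hcard, ih hu]

theorem mdist_sdiff_sdiff (h : #s = #t) : mdist (s \ t) (t \ s) = mdist s t := by
  simpa [sdiff_inter_self_left, sdiff_inter_self_right] using
    mdist_sdiff_of_subset_inter h subset_rfl

end Mdist

/-- **Complement identity for the matching distance.** For subsets `S, P` of a
finite metric space `V` with `|S| = |P|`, the min-cost matching distance between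
`S` and `P` equals that between their complements. -/
theorem mdist_compl {α : Type*} [Fintype α] [MetricSpace α] [DecidableEq α]
    (S P : Finset α) (h : S.card = P.card) :
    mdist S P = mdist Sᶜ Pᶜ := by
  have hc : #Sᶜ = #Pᶜ := by rw [card_compl, card_compl, h]
  rw [← mdist_sdiff_sdiff h, ← mdist_sdiff_sdiff hc, compl_sdiff_compl, compl_sdiff_compl, mdist_comm]
end

section
/- One-step cost bound for Follow-the-Prediction in online matching: let Φ_i = dist(S_i, P_i) be the potential after round i, where S_i is FtP's matched-server set and P_i the predicted set. If FtP matches request r_{i+1} to μ_i(s), where s ∈ P_{i+1}∖P_i is the server matched to r_{i+1} in a min-cost matching between P_{i+1} and the multiset P_i ∪ {r_{i+1}}, and μ_i is an optimal matching between S_i and P_i extended by identity outside S_i ∪ P_i, then d(r_{i+1}, μ_i(s)) + Φ_{i+1} ≤ dist(P_{i+1}, P_i ∪ {r_{i+1}}) + Φ_i. -/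
/-- Min-cost perfect matching (earth-mover) distance between two finite
multisets of points of a metric space: the infimum over simultaneous
enumerations of the sum of distances of matched pairs. -/
noncomputable def mdistM {α : Type*} [MetricSpace α] (s t : Multiset α) : ℝ :=
  sInf {c | ∃ l₁ l₂ : List α, (l₁ : Multiset α) = s ∧ (l₂ : Multiset α) = t ∧
    c = (List.zipWith dist l₁ l₂).sum}

/-!
To bound `Φ_{i+1} = dist(S_i ∪ {μ s}, P_{i+1})`, pass through `P_i ∪ {s}`. Matching
`S_i ∪ {μ s}` to `P_i ∪ {s}` along `μ`, but with `s` and `μ s` matched to themselves, costs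
`Φ_i - d(s, μ s)`; and `dist(P_i ∪ {s}, P_{i+1}) ≤ dist(P_i, P_{i+1} ∖ {s})` by matching `s`
to itself. The triangle inequality for the matching distance and `d(r, μ s) ≤ d(r, s) + d(s, μ s)`
then give the bound, thanks to the splitting of `dist(P_{i+1}, P_i ∪ {r})` at the edge `(s, r)`.
-/

open List

theorem List.Perm.exists_zip_perm {α β : Type*} {l₁ l₁' : List α} (h : l₁ ~ l₁') :
    ∀ {l₂ : List β}, l₁.length = l₂.length →
      ∃ l₂' : List β, l₁'.zip l₂' ~ l₁.zip l₂ ∧ l₁'.length = l₂'.length := by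
  induction h with
  | nil => exact fun _ => ⟨[], by simp, rfl⟩
  | cons x _ ih =>
    intro l₂ hl
    obtain _ | ⟨y, l₂⟩ := l₂
    · simp at hl
    obtain ⟨l₂', hperm, hlen⟩ := ih (by simpa using hl)
    exact ⟨y :: l₂', by simpa using hperm.cons (x, y), by simpa using hlen⟩
  | swap x y l =>
    intro l₂ hl
    match l₂, hl with
    | a :: b :: l₂, hl =>
      exact ⟨b :: a :: l₂, by simpa using Perm.swap (y, a) (x, b) (l.zip l₂), by simpa using hl⟩
  | trans _ _ ih₁ ih₂ =>
    intro l₂ hl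
    obtain ⟨m, hm, hlm⟩ := ih₁ hl
    obtain ⟨l₂', hperm, hlen⟩ := ih₂ hlm
    exact ⟨l₂', hperm.trans hm, hlen⟩

section MatchingDistance

open scoped Pointwise

variable {α : Type*} [MetricSpace α]

theorem sum_zipWith_dist_nonneg (l₁ l₂ : List α) : 0 ≤ (zipWith dist l₁ l₂).sum := by
  rw [← map_uncurry_zip_eq_zipWith]
  exact sum_nonneg fun _ hc => by
    obtain ⟨_, _, rfl⟩ := List.mem_map.mp hc
    exact dist_nonneg

theorem sum_zipWith_dist_le_add (l₁ l₂ l₃ : List α) (h : l₁.length ≤ l₂.length) :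
    (zipWith dist l₁ l₃).sum ≤ (zipWith dist l₁ l₂).sum + (zipWith dist l₂ l₃).sum := by
  induction l₁ generalizing l₂ l₃ with
  | nil => simpa using sum_zipWith_dist_nonneg l₂ l₃
  | cons a l₁ ih =>
    obtain _ | ⟨b, l₂⟩ := l₂
    · simp at h
    obtain _ | ⟨c, l₃⟩ := l₃
    · simp only [zipWith_nil_right, sum_nil, add_zero]
      exact sum_zipWith_dist_nonneg _ _
    simp only [zipWith_cons_cons, sum_cons]
    linarith [ih l₂ l₃ (by simpa using h), dist_triangle a b c]

theorem exists_perm_sum_zipWith_dist_eq {l₁ l₁' l₂ : List α} (h : l₁ ~ l₁')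
    (hl : l₁.length = l₂.length) :
    ∃ l₂', l₂' ~ l₂ ∧ (zipWith dist l₁' l₂').sum = (zipWith dist l₁ l₂).sum := by
  obtain ⟨l₂', hzip, hlen⟩ := h.exists_zip_perm hl
  refine ⟨l₂', ?_, ?_⟩
  · simpa [map_snd_zip, hl, hlen] using hzip.map Prod.snd
  · simpa [map_uncurry_zip_eq_zipWith] using (hzip.map (Function.uncurry dist)).sum_eq

def matchingCosts (s t : Multiset α) : Set ℝ :=
  {c | ∃ l₁ l₂ : List α, (l₁ : Multiset α) = s ∧ (l₂ : Multiset α) = t ∧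
    c = (zipWith dist l₁ l₂).sum}

theorem mdistM_eq_sInf_matchingCosts (s t : Multiset α) :
    mdistM s t = sInf (matchingCosts s t) :=
  rfl

theorem matchingCosts_nonempty (s t : Multiset α) : (matchingCosts s t).Nonempty := by
  induction s using Quotient.inductionOn
  induction t using Quotient.inductionOn
  exact ⟨_, _, _, rfl, rfl, rfl⟩

theorem matchingCosts_bddBelow (s t : Multiset α) : BddBelow (matchingCosts s t) :=
  ⟨0, by rintro _ ⟨l₁, l₂, -, -, rfl⟩; exact sum_zipWith_dist_nonneg l₁ l₂⟩

theorem mdistM_le_sum_zipWith (l₁ l₂ : List α) :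
    mdistM (l₁ : Multiset α) l₂ ≤ (zipWith dist l₁ l₂).sum :=
  csInf_le (matchingCosts_bddBelow _ _) ⟨l₁, l₂, rfl, rfl, rfl⟩

theorem mdistM_comm (s t : Multiset α) : mdistM s t = mdistM t s := by
  have swap : ∀ s t : Multiset α, matchingCosts s t ⊆ matchingCosts t s := by
    rintro s t _ ⟨l₁, l₂, h₁, h₂, rfl⟩
    exact ⟨l₂, l₁, h₂, h₁, by rw [zipWith_comm_of_comm dist_comm]⟩
  rw [mdistM_eq_sInf_matchingCosts, (swap s t).antisymm (swap t s), mdistM_eq_sInf_matchingCosts]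

theorem mdistM_cons_le (x y : α) (s t : Multiset α) :
    mdistM (x ::ₘ s) (y ::ₘ t) ≤ dist x y + mdistM s t := by
  rw [← sub_le_iff_le_add']
  refine le_csInf (matchingCosts_nonempty s t) ?_
  rintro _ ⟨l₁, l₂, rfl, rfl, rfl⟩
  rw [sub_le_iff_le_add']
  simpa using mdistM_le_sum_zipWith (x :: l₁) (y :: l₂)

theorem mdistM_cons_self_le (x : α) (s t : Multiset α) :
    mdistM (x ::ₘ s) (x ::ₘ t) ≤ mdistM s t := by
  simpa using mdistM_cons_le x x s t

theorem mdistM_map_le (s : Multiset α) (f : α → α) :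
    mdistM s (s.map f) ≤ (s.map fun x => dist x (f x)).sum := by
  induction s using Quotient.inductionOn with
  | h l => simpa [zipWith_map_right, zipWith_self] using mdistM_le_sum_zipWith l (l.map f)

/-- The cardinality hypotheses matter: between multisets of different sizes there is no
matching, and `mdistM` is then `sInf ∅ = 0`. -/
theorem mdistM_triangle (a b c : Multiset α) (hab : Multiset.card a = Multiset.card b)
    (hbc : Multiset.card b = Multiset.card c) : mdistM a c ≤ mdistM a b + mdistM b c := by
  simp only [mdistM_eq_sInf_matchingCosts]
  rw [← csInf_add (matchingCosts_nonempty a b) (matchingCosts_bddBelow a b)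
      (matchingCosts_nonempty b c) (matchingCosts_bddBelow b c)]
  refine le_csInf ((matchingCosts_nonempty a b).add (matchingCosts_nonempty b c)) ?_
  rintro _ ⟨_, ⟨l₁, l₂, rfl, rfl, rfl⟩, _, ⟨l₂', l₃, h₂, rfl, rfl⟩, rfl⟩
  have hperm : l₂' ~ l₂ := Quotient.exact h₂
  obtain ⟨l₃', hl₃', hsum⟩ := exists_perm_sum_zipWith_dist_eq hperm
    (by simpa [hperm.length_eq] using hbc)
  calc mdistM (l₁ : Multiset α) l₃
      = mdistM (l₁ : Multiset α) l₃' := by rw [Multiset.coe_eq_coe.mpr hl₃']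
    _ ≤ (zipWith dist l₁ l₃').sum := mdistM_le_sum_zipWith l₁ l₃'
    _ ≤ (zipWith dist l₁ l₂).sum + (zipWith dist l₂ l₃').sum :=
      sum_zipWith_dist_le_add l₁ l₂ l₃' (by simpa using hab.le)
    _ = _ := by rw [hsum]

theorem mdistM_insert_add_dist_le [DecidableEq α] {S : Finset α} {μ : α → α} {s : α}
    (hμs : μ s ∉ S) (hfix : s ∉ S → μ s = s) :
    mdistM (insert (μ s) S).val (s ::ₘ S.val.map μ) + dist s (μ s) ≤ ∑ x ∈ S, dist x (μ x) := by
  rw [Finset.insert_val_of_notMem hμs]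
  by_cases hs : s ∈ S
  · have hS : S.val = s ::ₘ (S.erase s).val := (Multiset.cons_erase hs).symm
    have hmatch : mdistM (μ s ::ₘ S.val) (s ::ₘ S.val.map μ) ≤ ∑ x ∈ S.erase s, dist x (μ x) :=
      calc mdistM (μ s ::ₘ S.val) (s ::ₘ S.val.map μ)
          = mdistM (s ::ₘ μ s ::ₘ (S.erase s).val) (s ::ₘ μ s ::ₘ (S.erase s).val.map μ) := by
            rw [hS, Multiset.map_cons, Multiset.cons_swap]
        _ ≤ mdistM (S.erase s).val ((S.erase s).val.map μ) :=
            (mdistM_cons_self_le _ _ _).trans (mdistM_cons_self_le _ _ _)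
        _ ≤ ∑ x ∈ S.erase s, dist x (μ x) := mdistM_map_le _ μ
    linarith [Finset.sum_erase_add S (fun x => dist x (μ x)) hs]
  · rw [hfix hs, dist_self, add_zero]
    exact (mdistM_cons_self_le s _ _).trans (mdistM_map_le _ μ)

end MatchingDistance

theorem ftp_matching_step_general {α : Type*} [MetricSpace α] [DecidableEq α] (i : ℕ)
    (Si Pi Pi1 : Finset α) (r s : α) (μ : α → α)
    (hSi : Si.card = i) (hPi : Pi.card = i) (hPi1 : Pi1.card = i + 1)
    (hsmem : s ∈ Pi1) (hsnot : s ∉ Pi)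
    (hsplit : mdistM (Pi1.val) (Pi.val + {r}) =
      dist s r + mdistM ((Pi1.erase s).val) (Pi.val))
    (hbij : Set.BijOn μ ↑Si ↑Pi)
    (hext : ∀ x, x ∉ Si → x ∉ Pi → μ x = x)
    (hopt : ∑ x ∈ Si, dist x (μ x) = mdistM Si.val Pi.val)
    (hμs : μ s ∉ Si) :
    dist r (μ s) + mdistM ((insert (μ s) Si).val) (Pi1.val) ≤
      mdistM (Pi1.val) (Pi.val + {r}) + mdistM (Si.val) (Pi.val) := by
  have hmap : Si.val.map μ = Pi.val := by
    rw [← Finset.image_val_of_injOn hbij.injOn, Finset.val_inj, ← Finset.coe_inj, Finset.coe_image,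
      hbij.image_eq]
  have hPi1_val : Pi1.val = s ::ₘ (Pi1.erase s).val := (Multiset.cons_erase hsmem).symm
  have hmatch := mdistM_insert_add_dist_le hμs (hext s · hsnot)
  rw [hmap] at hmatch
  have hvia := mdistM_triangle (insert (μ s) Si).val (s ::ₘ Pi.val) Pi1.val
    (by rw [Multiset.card_cons, ← Finset.card_def, ← Finset.card_def,
      Finset.card_insert_of_notMem hμs, hSi, hPi])
    (by rw [Multiset.card_cons, ← Finset.card_def, ← Finset.card_def, hPi, hPi1])
  have hdrop : mdistM (s ::ₘ Pi.val) Pi1.val ≤ mdistM (Pi1.erase s).val Pi.val := by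
    rw [hPi1_val, mdistM_comm]
    exact mdistM_cons_self_le s _ _
  rw [hsplit, ← hopt]
  linarith [dist_triangle_left r (μ s) s]

/-- **One-step cost bound for Follow-the-Prediction in online matching.**
`Si` and `Pi` are FtP's and the predictor's server sets after round `i`
(both of size `i`), `Pi1` is the prediction for round `i+1`, `r` the new
request, `s ∈ Pi1 ∖ Pi` the server matched to `r` in a min-cost matching
between `Pi1` and `Pi ∪ {r}`, and `μ` an optimal matching between `Si` and
`Pi`, fixing `Si ∩ Pi` pointwise and extended by the identity outside
`Si ∪ Pi`. FtP matches `r` to `μ s ∉ Si`, so `S_{i+1} = Si ∪ {μ s}` and, with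
`Φ_i = dist(S_i, P_i)`,
`d(r, μ s) + Φ_{i+1} ≤ dist(P_{i+1}, P_i ∪ {r}) + Φ_i`. -/
theorem ftp_matching_step {α : Type*} [MetricSpace α] [DecidableEq α] (i : ℕ)
    (Si Pi Pi1 : Finset α) (r s : α) (μ : α → α)
    (hSi : Si.card = i) (hPi : Pi.card = i) (hPi1 : Pi1.card = i + 1)
    (hsmem : s ∈ Pi1) (hsnot : s ∉ Pi)
    (hsplit : mdistM (Pi1.val) (Pi.val + {r}) =
      dist s r + mdistM ((Pi1.erase s).val) (Pi.val))
    (hbij : Set.BijOn μ ↑Si ↑Pi)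
    (hfix : ∀ x ∈ Si ∩ Pi, μ x = x)
    (hext : ∀ x, x ∉ Si → x ∉ Pi → μ x = x)
    (hopt : ∑ x ∈ Si, dist x (μ x) = mdistM Si.val Pi.val)
    (hμs : μ s ∉ Si) :
    dist r (μ s) + mdistM ((insert (μ s) Si).val) (Pi1.val) ≤
      mdistM (Pi1.val) (Pi.val + {r}) + mdistM (Si.val) (Pi.val) :=
  ftp_matching_step_general i Si Pi Pi1 r s μ hSi hPi hPi1 hsmem hsnot hsplit hbij hext hopt hμs
end
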